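/- arXiv:2203.00606 — 2 statements merged into one kernel-verified Lean document; each statement's English description precedes it below -/
import Mathlib

section
/- Translation covariance: for y ∈ ℝ^N, (W_ψ^{α,λ}(τ_y f))(a,b) = e_{α,-λ²}(b) e_{α,λ²}(b-y) e_{α,λ²}(y) (W_ψ^{α,λ} \check{f})(a, b-y), where (τ_y f)(x) = f(x-y) and \check{f}(t) = f(t) exp(iλ² Σ_{k=1}^N 2 (cot α_k/2) t_k y_k). -/
open MeasureTheory Real Complex Finset

noncomputable section

/-- Points of `ℝ^N` with all coordinates nonzero (`ℝ₀^N`). -/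
def Omega (N : ℕ) : Set (Fin N → ℝ) := {a | ∀ k, a k ≠ 0}

/-- `|a|_m = |a₁ a₂ ⋯ a_N|`. -/
def modAbs {N : ℕ} (a : Fin N → ℝ) : ℝ := |∏ k, a k|

/-- The chirp `e_{α,μ}(t) = exp(i μ Σ_k (cot α_k / 2) t_k²)`. -/
def chirp {N : ℕ} (α : Fin N → ℝ) (μ : ℝ) (t : Fin N → ℝ) : ℂ :=
  Complex.exp (Complex.I *
    ((μ * ∑ k, ((Real.cos (α k) / Real.sin (α k)) / 2) * (t k) ^ 2 : ℝ) : ℂ))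

/-- The window function `Ψ_{α,λ,a,b}`. -/
def window {N : ℕ} (c : ℂ) (α : Fin N → ℝ) (l : ℝ) (ψ : (Fin N → ℝ) → ℂ)
    (a b t : Fin N → ℝ) : ℂ :=
  (starRingEnd ℂ) c * chirp α (l ^ 2) b * chirp α (-(l ^ 2)) t *
    ((((modAbs a) ^ (-(1 / 2 : ℝ)) : ℝ)) : ℂ) *
    (ψ (fun k => (t k - b k) / a k) * chirp α (l ^ 2) (fun k => (t k - b k) / a k))

/-- The multidimensional fractional wavelet transform `(W_ψ^{α,λ} f)(a,b) = ⟨f, Ψ_{α,λ,a,b}⟩`. -/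
def MFrWT {N : ℕ} (c : ℂ) (α : Fin N → ℝ) (l : ℝ) (ψ f : (Fin N → ℝ) → ℂ)
    (a b : Fin N → ℝ) : ℂ :=
  ∫ t : Fin N → ℝ, f t * (starRingEnd ℂ) (window c α l ψ a b t)

/-- The multidimensional fractional Fourier kernel. -/
def frKernel {N : ℕ} (c : ℂ) (α : Fin N → ℝ) (l : ℝ) (t ξ : Fin N → ℝ) : ℂ :=
  c / ((Real.sqrt (2 * Real.pi) : ℝ) : ℂ) ^ (N : ℕ) * chirp α (l ^ 2) t * chirp α (l ^ 2) ξ *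
    Complex.exp (-(Complex.I) * ((l ^ 2 * ∑ k, t k * ξ k / Real.sin (α k) : ℝ) : ℂ))

/-- The multidimensional fractional Fourier transform. -/
def MFrFT {N : ℕ} (c : ℂ) (α : Fin N → ℝ) (l : ℝ) (f : (Fin N → ℝ) → ℂ)
    (ξ : Fin N → ℝ) : ℂ :=
  ∫ t : Fin N → ℝ, f t * frKernel c α l t ξ

/-- The admissibility constant `C_{α,λ}`. -/
def Cconst {N : ℕ} (c : ℂ) (α : Fin N → ℝ) (l : ℝ) (ψ : (Fin N → ℝ) → ℂ) : ℝ :=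
  (2 * Real.pi) ^ (N : ℕ) * ∫ u in Omega N, ‖MFrFT c α l ψ u‖ ^ 2 / modAbs u

/-- An admissible wavelet. -/
def Admissible {N : ℕ} (c : ℂ) (α : Fin N → ℝ) (l : ℝ) (ψ : (Fin N → ℝ) → ℂ) : Prop :=
  MemLp ψ 2 (volume : Measure (Fin N → ℝ)) ∧ ψ ≠ 0 ∧
    IntegrableOn (fun u => ‖MFrFT c α l ψ u‖ ^ 2 / modAbs u) (Omega N)

/-- `α_k ∈ (-π, π) \ {0}` for every `k`. -/
def goodAngles (N : ℕ) (α : Fin N → ℝ) : Prop :=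
  ∀ k, α k ∈ Set.Ioo (-Real.pi) Real.pi ∧ α k ≠ 0

/-!
Substituting `t ↦ t + y` moves the translation from `f` onto the window. Since the chirp is the
exponential of a quadratic form, `e_{α,μ}(t + y) = e_{α,μ}(t) e_{α,μ}(y) exp(2iμ Σ_k (cot α_k / 2) t_k y_k)`,
so the shifted window `Ψ_{a,b}(t + y)` is `Ψ_{a,b-y}(t)` times constant chirps and the cross term,
which is absorbed into `f`.
-/

open ComplexConjugate

def chirpCross {N : ℕ} (α : Fin N → ℝ) (μ : ℝ) (t y : Fin N → ℝ) : ℂ :=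
  Complex.exp (Complex.I *
    ((μ * ∑ k, 2 * ((Real.cos (α k) / Real.sin (α k)) / 2) * t k * y k : ℝ) : ℂ))

section Chirp

variable {N : ℕ} (α : Fin N → ℝ) (μ : ℝ)

lemma conj_chirp (t : Fin N → ℝ) : conj (chirp α μ t) = chirp α (-μ) t := by
  rw [chirp, chirp, ← Complex.exp_conj]
  simp only [map_mul, Complex.conj_I, Complex.conj_ofReal]
  push_cast
  ring_nf

lemma conj_chirpCross (t y : Fin N → ℝ) : conj (chirpCross α μ t y) = chirpCross α (-μ) t y := by
  rw [chirpCross, chirpCross, ← Complex.exp_conj]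
  simp only [map_mul, Complex.conj_I, Complex.conj_ofReal]
  push_cast
  ring_nf

lemma chirp_mul_chirp_neg (t : Fin N → ℝ) : chirp α μ t * chirp α (-μ) t = 1 := by
  rw [chirp, chirp, ← Complex.exp_add, ← Complex.exp_zero]
  push_cast
  ring_nf

lemma chirp_add (t y : Fin N → ℝ) :
    chirp α μ (t + y) = chirp α μ t * chirp α μ y * chirpCross α μ t y := by
  simp only [chirp, chirpCross, ← Complex.exp_add, Pi.add_apply]
  congr 1
  push_cast
  simp only [← mul_add, ← Finset.sum_add_distrib]
  congr 2
  refine Finset.sum_congr rfl fun k _ => ?_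
  ring

end Chirp

lemma window_add {N : ℕ} (c : ℂ) (α : Fin N → ℝ) (l : ℝ) (ψ : (Fin N → ℝ) → ℂ)
    (a b t y : Fin N → ℝ) :
    window c α l ψ a b (t + y) =
      chirp α (l ^ 2) b * chirp α (-(l ^ 2)) (b - y) * chirp α (-(l ^ 2)) y *
        chirpCross α (-(l ^ 2)) t y * window c α l ψ a (b - y) t := by
  have hscaled : (fun k => ((t + y) k - b k) / a k) = fun k => (t k - (b - y) k) / a k := by
    funext k
    simp only [Pi.add_apply, Pi.sub_apply]
    ring
  rw [← mul_one (window c α l ψ a b (t + y)), ← chirp_mul_chirp_neg α (l ^ 2) (b - y)]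
  simp only [window, hscaled, chirp_add α (-(l ^ 2)) t y]
  ring

theorem mfrwt_translation_general (N : ℕ) (α : Fin N → ℝ) (l : ℝ) (c : ℂ)
    (ψ f : (Fin N → ℝ) → ℂ)
    (y : Fin N → ℝ) (a b : Fin N → ℝ) :
    MFrWT c α l ψ (fun x => f (x - y)) a b =
      chirp α (-(l ^ 2)) b * chirp α (l ^ 2) (b - y) * chirp α (l ^ 2) y *
        MFrWT c α l ψ
          (fun t => f t * Complex.exp (Complex.I *
            ((l ^ 2 * ∑ k, 2 * ((Real.cos (α k) / Real.sin (α k)) / 2) * t k * y k : ℝ) : ℂ)))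
          a (b - y) := by
  have htranslate : MFrWT c α l ψ (fun x => f (x - y)) a b =
      ∫ t, f t * conj (window c α l ψ a b (t + y)) := by
    rw [MFrWT, ← integral_sub_right_eq_self (fun t => f t * conj (window c α l ψ a b (t + y))) y]
    simp only [sub_add_cancel]
  have hwindow (t : Fin N → ℝ) : f t * conj (window c α l ψ a b (t + y)) =
      chirp α (-(l ^ 2)) b * chirp α (l ^ 2) (b - y) * chirp α (l ^ 2) y *
        (f t * chirpCross α (l ^ 2) t y * conj (window c α l ψ a (b - y) t)) := by
    simp only [window_add, map_mul, conj_chirp, conj_chirpCross, neg_neg]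
    ring
  rw [htranslate, MFrWT, ← integral_const_mul]
  exact integral_congr_ae (.of_forall hwindow)

/-- translation covariance of the MFrWT. -/
theorem mfrwt_translation (N : ℕ) (α : Fin N → ℝ) (l : ℝ) (hl : l ≠ 0) (c : ℂ) (hc : c ≠ 0)
    (hα : goodAngles N α) (ψ f : (Fin N → ℝ) → ℂ)
    (hψ : Admissible c α l ψ)
    (hf : MemLp f 2 (volume : Measure (Fin N → ℝ)))
    (y : Fin N → ℝ) (a b : Fin N → ℝ) (ha : ∀ k, a k ≠ 0) :
    MFrWT c α l ψ (fun x => f (x - y)) a b =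
      chirp α (-(l ^ 2)) b * chirp α (l ^ 2) (b - y) * chirp α (l ^ 2) y *
        MFrWT c α l ψ
          (fun t => f t * Complex.exp (Complex.I *
            ((l ^ 2 * ∑ k, 2 * ((Real.cos (α k) / Real.sin (α k)) / 2) * t k * y k : ℝ) : ℂ)))
          a (b - y) :=
  mfrwt_translation_general N α l c ψ f y a b
end
end

section
/- MFrFT of the wavelet window: for ψ ∈ L²(ℝ^N), a ∈ ℝ_0^N, b ∈ ℝ^N, (F_{α,λ} Ψ_{α,λ,a,b})(ξ) = conj(c(α_λ)) √(|a|_m) e_{α,λ²}(b) e_{α,λ²}(ξ) e_{α,-λ²}(aξ) exp(-iλ² Σ_{k=1}^N b_k ξ_k csc α_k) (F_{α,λ} ψ)(aξ), where aξ is componentwise product. -/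
open MeasureTheory Real Complex Finset

noncomputable section

/-! Substitute `u = (t - b) / a` in the integral defining the transform of the window. The
chirp `e_{α,-λ²}(t)` of the window cancels the chirp `e_{α,λ²}(t)` of the kernel, and since
`t_k ξ_k = b_k ξ_k + u_k (a ξ)_k` the cross term of the kernel splits off a factor independent
of `t`, leaving `ψ(u) K_{α,λ}(u, a ξ)` times constants. The Jacobian `|a|_m` of the substitution
combines with `|a|_m^{-1/2}` into `√|a|_m`. -/

theorem integral_comp_div_pi {ι : Type*} [Fintype ι] {E : Type*} [NormedAddCommGroup E]
    [NormedSpace ℝ E] {a : ι → ℝ} (ha : ∀ i, a i ≠ 0) (g : (ι → ℝ) → E) :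
    ∫ x, g (x / a) = |∏ i, a i| • ∫ y, g y := by
  classical
  let e : (ι → ℝ) ≃ₜ (ι → ℝ) :=
    Homeomorph.piCongrRight fun i => Homeomorph.mulRight₀ (a i)⁻¹ (inv_ne_zero (ha i))
  have he : ⇑e = Matrix.toLin' (Matrix.diagonal a⁻¹) := by
    ext x i
    simp [e, Matrix.mulVec_diagonal, mul_comm]
  have hdet : LinearMap.det (Matrix.toLin' (Matrix.diagonal a⁻¹)) = ∏ i, (a i)⁻¹ := by
    simp [LinearMap.det_toLin', Matrix.det_diagonal]
  have hmap : Measure.map e volume = ENNReal.ofReal |∏ i, a i| • volume := by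
    rw [he, Real.map_linearMap_volume_pi_eq_smul_volume_pi
      (by simp [hdet, Finset.prod_ne_zero_iff, ha]), hdet, Finset.prod_inv_distrib, inv_inv]
  calc ∫ x, g (x / a) = ∫ x, g (e x) := by congr 1 with x
    _ = ∫ y, g y ∂(Measure.map e volume) := (e.measurableEmbedding.integral_map g).symm
    _ = |∏ i, a i| • ∫ y, g y := by
      rw [hmap, integral_smul_measure, ENNReal.toReal_ofReal (abs_nonneg _)]

theorem integral_comp_sub_div_pi {ι : Type*} [Fintype ι] {E : Type*} [NormedAddCommGroup E]
    [NormedSpace ℝ E] {a : ι → ℝ} (ha : ∀ i, a i ≠ 0) (b : ι → ℝ) (g : (ι → ℝ) → E) :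
    ∫ x, g ((x - b) / a) = |∏ i, a i| • ∫ y, g y := by
  rw [integral_sub_right_eq_self (fun x => g (x / a)) b, integral_comp_div_pi ha]

theorem Real.rpow_neg_half_mul_self {x : ℝ} (hx : 0 ≤ x) : x ^ (-(1 / 2 : ℝ)) * x = √x := by
  rw [Real.rpow_neg hx, ← Real.sqrt_eq_rpow, ← div_eq_inv_mul, Real.div_sqrt]

theorem chirp_neg {N : ℕ} (α : Fin N → ℝ) (μ : ℝ) (t : Fin N → ℝ) :
    chirp α (-μ) t = (chirp α μ t)⁻¹ := by
  rw [chirp, chirp, ← Complex.exp_neg, neg_mul, Complex.ofReal_neg, mul_neg]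

theorem exp_cross_term_split {ι : Type*} [Fintype ι] (s : ι → ℝ) (μ : ℝ) {a : ι → ℝ}
    (ha : ∀ k, a k ≠ 0) (b t ξ : ι → ℝ) :
    Complex.exp (-(Complex.I) * ((μ * ∑ k, t k * ξ k / s k : ℝ) : ℂ)) =
      Complex.exp (-(Complex.I) * ((μ * ∑ k, b k * ξ k / s k : ℝ) : ℂ)) *
      Complex.exp (-(Complex.I) *
        ((μ * ∑ k, ((t - b) / a) k * (a * ξ) k / s k : ℝ) : ℂ)) := by
  have hsum : ∑ k, ((t - b) / a) k * (a * ξ) k / s k =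
      ∑ k, t k * ξ k / s k - ∑ k, b k * ξ k / s k := by
    rw [← Finset.sum_sub_distrib]
    refine Finset.sum_congr rfl fun k _ => ?_
    simp only [Pi.div_apply, Pi.sub_apply, Pi.mul_apply]
    field_simp [ha k]
  rw [← Complex.exp_add, hsum]
  congr 1
  push_cast
  ring

theorem window_mul_frKernel {N : ℕ} (c : ℂ) (α : Fin N → ℝ) (l : ℝ) (ψ : (Fin N → ℝ) → ℂ)
    {a : Fin N → ℝ} (ha : ∀ k, a k ≠ 0) (b ξ t : Fin N → ℝ) :
    window c α l ψ a b t * frKernel c α l t ξ =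
      ((starRingEnd ℂ) c * ((modAbs a ^ (-(1 / 2 : ℝ)) : ℝ) : ℂ) *
        chirp α (l ^ 2) b * chirp α (l ^ 2) ξ * chirp α (-(l ^ 2)) (a * ξ) *
        Complex.exp (-(Complex.I) * ((l ^ 2 * ∑ k, b k * ξ k / Real.sin (α k) : ℝ) : ℂ))) *
      (ψ ((t - b) / a) * frKernel c α l ((t - b) / a) (a * ξ)) := by
  have ht : chirp α (l ^ 2) t ≠ 0 := Complex.exp_ne_zero _
  have haξ : chirp α (l ^ 2) (a * ξ) ≠ 0 := Complex.exp_ne_zero _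
  have hu : (fun k => (t k - b k) / a k) = (t - b) / a := rfl
  rw [window, hu, frKernel, frKernel,
    exp_cross_term_split (fun k => Real.sin (α k)) (l ^ 2) ha b t ξ, chirp_neg, chirp_neg]
  generalize (t - b) / a = u
  field_simp

theorem mfrft_window_general (N : ℕ) (α : Fin N → ℝ) (l : ℝ) (c : ℂ)
    (ψ : (Fin N → ℝ) → ℂ)
    (a b ξ : Fin N → ℝ) (ha : ∀ k, a k ≠ 0) :
    MFrFT c α l (window c α l ψ a b) ξ =
      (starRingEnd ℂ) c * ((Real.sqrt (modAbs a) : ℝ) : ℂ) *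
        chirp α (l ^ 2) b * chirp α (l ^ 2) ξ * chirp α (-(l ^ 2)) (a * ξ) *
        Complex.exp (-(Complex.I) * ((l ^ 2 * ∑ k, b k * ξ k / Real.sin (α k) : ℝ) : ℂ)) *
        MFrFT c α l ψ (a * ξ) := by
  simp_rw [MFrFT, window_mul_frKernel c α l ψ ha b ξ, integral_const_mul,
    integral_comp_sub_div_pi ha b fun u => ψ u * frKernel c α l u (a * ξ)]
  rw [modAbs, ← Real.rpow_neg_half_mul_self (abs_nonneg (∏ k, a k)),
    Complex.ofReal_mul (|∏ k, a k| ^ _), Complex.real_smul]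
  ring

/-- MFrFT of the wavelet window `Ψ_{α,λ,a,b}`. -/
theorem mfrft_window (N : ℕ) (α : Fin N → ℝ) (l : ℝ) (hl : l ≠ 0) (c : ℂ) (hc : c ≠ 0)
    (hα : goodAngles N α) (ψ : (Fin N → ℝ) → ℂ)
    (hψ : MemLp ψ 2 (volume : Measure (Fin N → ℝ)))
    (a b ξ : Fin N → ℝ) (ha : ∀ k, a k ≠ 0) :
    MFrFT c α l (window c α l ψ a b) ξ =
      (starRingEnd ℂ) c * ((Real.sqrt (modAbs a) : ℝ) : ℂ) *
        chirp α (l ^ 2) b * chirp α (l ^ 2) ξ * chirp α (-(l ^ 2)) (a * ξ) *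
        Complex.exp (-(Complex.I) * ((l ^ 2 * ∑ k, b k * ξ k / Real.sin (α k) : ℝ) : ℂ)) *
        MFrFT c α l ψ (a * ξ) :=
  mfrft_window_general N α l c ψ a b ξ ha
end
end
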